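/- arXiv:2108.09903 — 3 statements merged into one kernel-verified Lean document; each statement's English description precedes it below -/
import Mathlib

section
/- Let P be a symmetric idempotent real n×n matrix with P ≠ 0 and P ≠ I, M a symmetric positive definite real n×n matrix, and for μ > 0 set M̄(μ) = P M P + μ (I − P). Let a = inf of the nonzero eigenvalues of P M P and b = sup of the eigenvalues of P M P. If a ≤ μ ≤ b, then for every μ' > 0 the condition number of M̄(μ) is at most that of M̄(μ'); equivalently, (sup spectrum M̄(μ)) · (inf spectrum M̄(μ')) ≤ (sup spectrum M̄(μ')) · (inf spectrum M̄(μ)). -/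
/-!
With respect to `ℝⁿ = range P ⊕ ker P`, the matrix `M̄(t) = PMP + t(I - P)` is block diagonal: it
acts as `PMP` on `range P`, where `PMP` is positive definite because `M` is, and as `t` on
`ker P ≠ 0`. Hence its spectrum is `{t} ∪ (spec(PMP) \ {0}) ⊆ {t} ∪ [a, b]`. For `a ≤ μ ≤ b`
this gives `cond M̄(μ) = b / a`, while for any `μ'` the largest eigenvalue of `M̄(μ')` is at
least `b` and the smallest at most `a`.
-/

open Matrix
open scoped ComplexOrder

namespace Matrix

variable {ι : Type*} [Fintype ι]

theorem PosDef.conj_mulVec_ne_zero {𝕜 : Type*} [RCLike 𝕜] {P M : Matrix ι ι 𝕜} (hM : M.PosDef)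
    (hPh : Pᴴ = P) {v : ι → 𝕜} (hv : v ≠ 0) (hPv : P *ᵥ v = v) : (P * M * P) *ᵥ v ≠ 0 := by
  intro h
  have hquad : star v ⬝ᵥ (M *ᵥ v) = star v ⬝ᵥ ((P * M * P) *ᵥ v) := by
    conv_lhs => rw [← hPv]
    rw [star_mulVec, ← dotProduct_mulVec, hPh, mulVec_mulVec, mulVec_mulVec, mul_assoc]
  have hpos := hM.dotProduct_mulVec_pos hv
  rw [hquad, h, dotProduct_zero] at hpos
  exact lt_irrefl _ hpos

variable [DecidableEq ι]

section Field

variable {K : Type*} [Field K]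

theorem mem_spectrum_iff_exists_mulVec_eq_smul (A : Matrix ι ι K) (x : K) :
    x ∈ spectrum K A ↔ ∃ v ≠ 0, A *ᵥ v = x • v := by
  rw [← spectrum_toLin', ← Module.End.hasEigenvalue_iff_mem_spectrum]
  constructor
  · intro h
    obtain ⟨v, hv⟩ := h.exists_hasEigenvector
    exact ⟨v, hv.2, by simpa using hv.apply_eq_smul⟩
  · rintro ⟨v, hv, h⟩
    exact Module.End.hasEigenvalue_of_hasEigenvector
      ⟨by simpa [Module.End.mem_eigenspace_iff] using h, hv⟩

variable {P A : Matrix ι ι K}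

theorem one_sub_mulVec_eq_zero_iff {v : ι → K} : (1 - P) *ᵥ v = 0 ↔ P *ᵥ v = v := by
  rw [sub_mulVec, one_mulVec, sub_eq_zero, eq_comm]

theorem exists_eigenvector_of_mem_spectrum_add_smul_one_sub (hP : P * P = P) (hPA : P * A = A)
    {t x : K} (hx : x ∈ spectrum K (A + t • (1 - P))) (hxt : x ≠ t) :
    ∃ v ≠ 0, P *ᵥ v = v ∧ A *ᵥ v = x • v := by
  obtain ⟨v, hv, hNv⟩ := (mem_spectrum_iff_exists_mulVec_eq_smul _ x).mp hx
  have hQN : (1 - P) * (A + t • (1 - P)) = t • (1 - P) := by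
    rw [mul_add, sub_mul, one_mul, hPA, sub_self, zero_add, mul_smul_comm, sub_mul, one_mul,
      mul_sub, mul_one, hP, sub_self, sub_zero]
  have hQv : (1 - P) *ᵥ v = 0 := by
    have h : t • ((1 - P) *ᵥ v) = x • ((1 - P) *ᵥ v) := by
      rw [← smul_mulVec, ← hQN, ← mulVec_mulVec, hNv, mulVec_smul]
    have h' : (t - x) • ((1 - P) *ᵥ v) = 0 := by rw [sub_smul, h, sub_self]
    exact (smul_eq_zero.mp h').resolve_left (sub_ne_zero.mpr hxt.symm)
  refine ⟨v, hv, one_sub_mulVec_eq_zero_iff.mp hQv, ?_⟩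
  rwa [add_mulVec, smul_mulVec, hQv, smul_zero, add_zero] at hNv

theorem mem_spectrum_add_smul_one_sub_of_mem_spectrum (hPA : P * A = A) {t x : K}
    (hx : x ∈ spectrum K A) (hx0 : x ≠ 0) : x ∈ spectrum K (A + t • (1 - P)) := by
  obtain ⟨v, hv, hAv⟩ := (mem_spectrum_iff_exists_mulVec_eq_smul _ x).mp hx
  have hPv : P *ᵥ v = v := by
    have h : x • (P *ᵥ v) = x • v := by rw [← mulVec_smul, ← hAv, mulVec_mulVec, hPA]
    exact smul_right_injective _ hx0 h
  refine (mem_spectrum_iff_exists_mulVec_eq_smul _ x).mpr ⟨v, hv, ?_⟩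
  rw [add_mulVec, smul_mulVec, one_sub_mulVec_eq_zero_iff.mpr hPv, smul_zero, add_zero, hAv]

theorem mem_spectrum_add_smul_one_sub (hP : P * P = P) (hAP : A * P = A) (hP1 : P ≠ 1) (t : K) :
    t ∈ spectrum K (A + t • (1 - P)) := by
  obtain ⟨u, hu⟩ : ∃ u, (1 - P) *ᵥ u ≠ 0 := by
    by_contra! h
    have hQ : 1 - P = 0 := toLin'.injective <| LinearMap.ext fun u => by
      rw [toLin'_apply, h u, map_zero, LinearMap.zero_apply]
    exact hP1 (sub_eq_zero.mp hQ).symm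
  refine (mem_spectrum_iff_exists_mulVec_eq_smul _ t).mpr ⟨_, hu, ?_⟩
  have hAQ : A * (1 - P) = 0 := by rw [mul_sub, mul_one, hAP, sub_self]
  have hQQ : (1 - P) * (1 - P) = 1 - P := by
    rw [sub_mul, one_mul, mul_sub, mul_one, hP, sub_self, sub_zero]
  rw [mulVec_mulVec, add_mul, hAQ, zero_add, smul_mul_assoc, hQQ, smul_mulVec]

end Field

section RCLike

variable {𝕜 : Type*} [RCLike 𝕜] {P M : Matrix ι ι 𝕜}

theorem spectrum_conj_add_smul_one_sub (hM : M.PosDef) (hPh : Pᴴ = P) (hP : P * P = P)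
    (hP1 : P ≠ 1) (t : 𝕜) :
    spectrum 𝕜 (P * M * P + t • (1 - P)) = insert t (spectrum 𝕜 (P * M * P) \ {0}) := by
  have hPA : P * (P * M * P) = P * M * P := by rw [← mul_assoc, ← mul_assoc, hP]
  have hAP : P * M * P * P = P * M * P := by rw [mul_assoc, hP]
  ext x
  constructor
  · intro hx
    rcases eq_or_ne x t with rfl | hxt
    · exact Set.mem_insert x _
    obtain ⟨v, hv, hPv, hAv⟩ := exists_eigenvector_of_mem_spectrum_add_smul_one_sub hP hPA hx hxt
    refine Or.inr ⟨(mem_spectrum_iff_exists_mulVec_eq_smul _ x).mpr ⟨v, hv, hAv⟩, ?_⟩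
    rintro rfl
    exact hM.conj_mulVec_ne_zero hPh hv hPv (by rw [hAv, zero_smul])
  · rintro (rfl | ⟨hx, hx0⟩)
    · exact mem_spectrum_add_smul_one_sub hP hAP hP1 x
    · exact mem_spectrum_add_smul_one_sub_of_mem_spectrum hPA hx hx0

end RCLike

end Matrix

theorem Real.sSup_diff_zero {S : Set ℝ} (hS : BddAbove S) (h0 : ∀ x ∈ S, 0 ≤ x) :
    sSup (S \ {0}) = sSup S := by
  have hT0 : 0 ≤ sSup (S \ {0}) := Real.sSup_nonneg fun x hx => h0 x hx.1
  refine le_antisymm (Real.sSup_le (fun x hx => le_csSup hS hx.1) (Real.sSup_nonneg h0))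
    (Real.sSup_le (fun x hx => ?_) hT0)
  by_cases hx0 : x = 0
  · exact hx0 ▸ hT0
  · exact le_csSup (hS.mono Set.sdiff_subset) ⟨hx, hx0⟩

theorem Real.sSup_insert_mul_sInf_insert_le {T : Set ℝ} (hT : BddAbove T) (hT0 : ∀ x ∈ T, 0 ≤ x)
    {μ : ℝ} (hμ : 0 < μ) (ha : sInf T ≤ μ) (hb : μ ≤ sSup T) (μ' : ℝ) :
    sSup (insert μ T) * sInf (insert μ' T) ≤ sSup (insert μ' T) * sInf (insert μ T) := by
  -- `sSup ∅ = 0` in `ℝ`, so `0 < μ ≤ sSup T` rules out `T = ∅`.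
  have hne : T.Nonempty := Set.nonempty_iff_ne_empty.mpr fun h => by
    rw [h, Real.sSup_empty] at hb
    linarith
  have hbdd : BddBelow T := ⟨0, hT0⟩
  have ha0 : 0 ≤ sInf T := Real.sInf_nonneg hT0
  rw [csSup_insert hT hne, csSup_insert hT hne, csInf_insert hbdd hne, csInf_insert hbdd hne,
    sup_eq_right.mpr hb, inf_eq_right.mpr ha]
  calc sSup T * (μ' ⊓ sInf T) ≤ sSup T * sInf T :=
        mul_le_mul_of_nonneg_left inf_le_right (ha0.trans (ha.trans hb))
    _ ≤ (μ' ⊔ sSup T) * sInf T := mul_le_mul_of_nonneg_right le_sup_right ha0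

theorem stmt_6_general (n : ℕ)
    (P M : Matrix (Fin n) (Fin n) ℝ)
    (hPsymm : Pᵀ = P) (hPidem : P * P = P) (hPne : P ≠ 1)
    (hM : M.PosDef) (μ : ℝ) (hμ : 0 < μ)
    (ha : sInf (spectrum ℝ (P * M * P) \ {0}) ≤ μ)
    (hb : μ ≤ sSup (spectrum ℝ (P * M * P))) :
    ∀ μ' : ℝ, 0 < μ' →
      sSup (spectrum ℝ (P * M * P + μ • ((1 : Matrix (Fin n) (Fin n) ℝ) - P))) *
        sInf (spectrum ℝ (P * M * P + μ' • ((1 : Matrix (Fin n) (Fin n) ℝ) - P))) ≤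
      sSup (spectrum ℝ (P * M * P + μ' • ((1 : Matrix (Fin n) (Fin n) ℝ) - P))) *
        sInf (spectrum ℝ (P * M * P + μ • ((1 : Matrix (Fin n) (Fin n) ℝ) - P))) := by
  intro μ' _
  have hPh : Pᴴ = P := by rw [conjTranspose_eq_transpose_of_trivial, hPsymm]
  have hS0 : ∀ x ∈ spectrum ℝ (P * M * P), 0 ≤ x := by
    have hpsd := hM.posSemidef.conjTranspose_mul_mul_same P
    rw [hPh] at hpsd
    exact (posSemidef_iff_isHermitian_and_spectrum_nonneg.mp hpsd).2
  have hSbdd : BddAbove (spectrum ℝ (P * M * P)) := (P * M * P).finite_real_spectrum.bddAbove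
  rw [spectrum_conj_add_smul_one_sub hM hPh hPidem hPne,
    spectrum_conj_add_smul_one_sub hM hPh hPidem hPne]
  exact Real.sSup_insert_mul_sInf_insert_le (hSbdd.mono Set.sdiff_subset)
    (fun x hx => hS0 x hx.1) hμ ha (Real.sSup_diff_zero hSbdd hS0 ▸ hb) μ'

/-- If the virtual mass `μ` lies between the smallest nonzero eigenvalue and the largest
eigenvalue of `PMP`, then the condition number of `M̄(μ) = PMP + μ(I - P)` is minimal:
for every other `μ' > 0`, `cond M̄(μ) ≤ cond M̄(μ')`, stated in product form. -/
theorem stmt_6 (n : ℕ)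
    (P M : Matrix (Fin n) (Fin n) ℝ)
    (hPsymm : Pᵀ = P) (hPidem : P * P = P) (hP0 : P ≠ 0) (hPne : P ≠ 1)
    (hM : M.PosDef) (μ : ℝ) (hμ : 0 < μ)
    (ha : sInf (spectrum ℝ (P * M * P) \ {0}) ≤ μ)
    (hb : μ ≤ sSup (spectrum ℝ (P * M * P))) :
    ∀ μ' : ℝ, 0 < μ' →
      sSup (spectrum ℝ (P * M * P + μ • ((1 : Matrix (Fin n) (Fin n) ℝ) - P))) *
        sInf (spectrum ℝ (P * M * P + μ' • ((1 : Matrix (Fin n) (Fin n) ℝ) - P))) ≤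
      sSup (spectrum ℝ (P * M * P + μ' • ((1 : Matrix (Fin n) (Fin n) ℝ) - P))) *
        sInf (spectrum ℝ (P * M * P + μ • ((1 : Matrix (Fin n) (Fin n) ℝ) - P))) :=
  stmt_6_general n P M hPsymm hPidem hPne hM μ hμ ha hb
end

section
/- Let P be a symmetric idempotent real n×n matrix, M a symmetric positive definite real n×n matrix, μ > 0, and M̄ = P M P + μ (I − P). Then S := I − M M̄⁻¹ P is an oblique projection matrix, i.e., S² = S. -/
open Matrix

/-!
Since `P` is idempotent, `P M̄ = M̄ P = P M P`. Hence `P` commutes with `M̄⁻¹` and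
`P M M̄⁻¹ P = P M P M̄⁻¹ = P M̄ M̄⁻¹ = P`, so `K = M M̄⁻¹ P` satisfies
`K² = M M̄⁻¹ (P M M̄⁻¹ P) = K`, and `S = 1 - K` is idempotent as well.
The inverse is a genuine one because `M̄` is positive definite:
`x* M̄ x = (Px)* M (Px) + μ ‖(1 - P) x‖²`, and `Px` and `(1 - P) x` cannot both vanish.
-/

section ConstraintInertia

variable {R A : Type*} [CommSemiring R] [Ring A] [Algebra R A]

def constraintInertia (P M : A) (μ : R) : A := P * M * P + μ • (1 - P)

variable {P : A} (M : A) (μ : R)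

theorem IsIdempotentElem.mul_constraintInertia (hP : IsIdempotentElem P) :
    P * constraintInertia P M μ = P * M * P := by
  rw [constraintInertia, mul_add, mul_smul_comm, mul_sub, mul_one, hP.eq, sub_self, smul_zero,
    add_zero, ← mul_assoc, ← mul_assoc, hP.eq]

theorem IsIdempotentElem.constraintInertia_mul (hP : IsIdempotentElem P) :
    constraintInertia P M μ * P = P * M * P := by
  rw [constraintInertia, add_mul, smul_mul_assoc, sub_mul, one_mul, hP.eq, sub_self, smul_zero,
    add_zero, mul_assoc, hP.eq]

theorem IsIdempotentElem.commute_constraintInertia (hP : IsIdempotentElem P) :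
    Commute P (constraintInertia P M μ) :=
  (hP.mul_constraintInertia M μ).trans (hP.constraintInertia_mul M μ).symm

end ConstraintInertia

theorem isIdempotentElem_one_sub_mul_mul_of_mul_mul_mul_eq {A : Type*} [Ring A] {P K L : A}
    (h : P * K * L * P = P) : IsIdempotentElem (1 - K * L * P) :=
  IsIdempotentElem.one_sub <| by
    rw [IsIdempotentElem, show K * L * P * (K * L * P) = K * L * (P * K * L * P) by
      simp only [mul_assoc], h]

namespace Matrix

variable {n α : Type*} [Fintype n] [DecidableEq n] [CommRing α]

theorem commute_nonsing_inv_right {A B : Matrix n n α} (h : Commute A B) (hB : IsUnit B.det) :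
    Commute A B⁻¹ := by
  calc A * B⁻¹ = B⁻¹ * (B * A) * B⁻¹ := by
        rw [← Matrix.mul_assoc, nonsing_inv_mul _ hB, Matrix.one_mul]
    _ = B⁻¹ * A := by rw [← h.eq, ← Matrix.mul_assoc, mul_nonsing_inv_cancel_right _ _ hB]

theorem mul_mul_constraintInertia_inv_mul {P : Matrix n n α} (hP : IsIdempotentElem P)
    (M : Matrix n n α) (μ : α) (hdet : IsUnit (constraintInertia P M μ).det) :
    P * M * (constraintInertia P M μ)⁻¹ * P = P := by
  have hcomm := commute_nonsing_inv_right (hP.commute_constraintInertia M μ) hdet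
  rw [Matrix.mul_assoc, ← hcomm.eq, ← Matrix.mul_assoc, ← hP.mul_constraintInertia M μ,
    mul_nonsing_inv_cancel_right _ _ hdet]

omit [DecidableEq n] in
theorem star_dotProduct_conjTranspose_mul_mul_mulVec [StarRing α] {m : Type*} [Fintype m]
    (A : Matrix m m α) (B : Matrix m n α) (x : n → α) :
    star x ⬝ᵥ (Bᴴ * A * B) *ᵥ x = star (B *ᵥ x) ⬝ᵥ A *ᵥ (B *ᵥ x) := by
  simp only [star_mulVec, dotProduct_mulVec, vecMul_vecMul, ← mulVec_mulVec]

open ComplexOrder in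
theorem posDef_constraintInertia {𝕜 : Type*} [RCLike 𝕜] {P M : Matrix n n 𝕜}
    (hPh : P.IsHermitian) (hP : IsIdempotentElem P) (hM : M.PosDef) {μ : ℝ} (hμ : 0 < μ) :
    (constraintInertia P M μ).PosDef := by
  have hQh : (1 - P)ᴴ * (1 - P) = 1 - P := by
    rw [conjTranspose_sub, conjTranspose_one, hPh.eq, hP.one_sub.eq]
  have hsplit : constraintInertia P M μ = Pᴴ * M * P + (1 - P)ᴴ * (μ • 1) * (1 - P) := by
    rw [Matrix.mul_smul, Matrix.mul_one, Matrix.smul_mul, hQh, hPh.eq, constraintInertia]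
  have hμ1 : (μ • 1 : Matrix n n 𝕜).PosDef := PosDef.one.smul hμ
  rw [hsplit]
  refine PosDef.of_dotProduct_mulVec_pos ((hM.posSemidef.conjTranspose_mul_mul_same P).add
    (hμ1.posSemidef.conjTranspose_mul_mul_same _)).isHermitian fun x hx => ?_
  rw [add_mulVec, dotProduct_add, star_dotProduct_conjTranspose_mul_mul_mulVec,
    star_dotProduct_conjTranspose_mul_mul_mulVec]
  by_cases hPx : P *ᵥ x = 0
  · have hQx : (1 - P) *ᵥ x ≠ 0 := by rwa [sub_mulVec, one_mulVec, hPx, sub_zero]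
    exact add_pos_of_nonneg_of_pos (hM.posSemidef.dotProduct_mulVec_nonneg _)
      (hμ1.dotProduct_mulVec_pos hQx)
  · exact add_pos_of_pos_of_nonneg (hM.dotProduct_mulVec_pos hPx)
      (hμ1.posSemidef.dotProduct_mulVec_nonneg _)

end Matrix

/-- `S = I - M M̄⁻¹ P` is an oblique projection matrix, i.e. `S² = S`, where
`M̄ = PMP + μ(I - P)` is the constraint inertia matrix. -/
theorem stmt_14 (n : ℕ)
    (P M : Matrix (Fin n) (Fin n) ℝ)
    (hPsymm : Pᵀ = P) (hPidem : P * P = P)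
    (hM : M.PosDef) (μ : ℝ) (hμ : 0 < μ)
    (Mbar S : Matrix (Fin n) (Fin n) ℝ)
    (hMbar : Mbar = P * M * P + μ • ((1 : Matrix (Fin n) (Fin n) ℝ) - P))
    (hS : S = 1 - M * Mbar⁻¹ * P) :
    S * S = S := by
  have hPh : P.IsHermitian := (conjTranspose_eq_transpose_of_trivial P).trans hPsymm
  have hdet : IsUnit (constraintInertia P M μ).det :=
    (isUnit_iff_isUnit_det _).mp (posDef_constraintInertia hPh hPidem hM hμ).isUnit
  replace hMbar : Mbar = constraintInertia P M μ := hMbar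
  subst hS hMbar
  exact isIdempotentElem_one_sub_mul_mul_of_mul_mul_mul_eq
    (mul_mul_constraintInertia_inv_mul hPidem M μ hdet)
end

section
/- Let P be a symmetric idempotent real n×n matrix, M a symmetric positive definite real n×n matrix, μ > 0, and M̄ = P M P + μ (I − P). Then X := M̄⁻¹ P is the Moore–Penrose pseudoinverse of M̄₀ := P M P; that is, M̄₀ X M̄₀ = M̄₀, X M̄₀ X = X, (M̄₀ X)ᵀ = M̄₀ X and (X M̄₀)ᵀ = X M̄₀. In particular M̄⁻¹ P is independent of μ. -/
/-!
The matrix `M̄ = PMP + μ(1 - P)` is positive definite, hence invertible, and it satisfies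
`M̄P = PM̄ = PMP`. So `M̄⁻¹` commutes with `P`, and `X = M̄⁻¹P` satisfies `PMP·X = X·PMP = P`;
since `P` is self-adjoint and idempotent, the four Penrose equations follow. Independence of `μ`
is the uniqueness of the Moore–Penrose inverse.
-/

open Matrix
open scoped ComplexOrder

def IsMoorePenroseInverse {R : Type*} [Mul R] [Star R] (a x : R) : Prop :=
  a * x * a = a ∧ x * a * x = x ∧ IsSelfAdjoint (a * x) ∧ IsSelfAdjoint (x * a)

namespace IsMoorePenroseInverse

variable {R : Type*} [Semigroup R] [StarMul R] {a x y : R}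

theorem unique (hx : IsMoorePenroseInverse a x) (hy : IsMoorePenroseInverse a y) : x = y := by
  obtain ⟨hx₁, hx₂, hx₃, hx₄⟩ := hx
  obtain ⟨hy₁, hy₂, hy₃, hy₄⟩ := hy
  have hleft : a * x = a * y :=
    calc a * x = star (a * y * a * x) := by rw [hy₁, hx₃.star_eq]
      _ = a * x * (a * y) := by rw [mul_assoc, star_mul, hx₃.star_eq, hy₃.star_eq]
      _ = a * y := by rw [← mul_assoc, hx₁]
  have hright : x * a = y * a :=
    calc x * a = star (x * (a * y * a)) := by rw [hy₁, hx₄.star_eq]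
      _ = y * a * (x * a) := by
        rw [← mul_assoc, ← mul_assoc, mul_assoc (x * a), star_mul, hx₄.star_eq, hy₄.star_eq]
      _ = y * a := by rw [← mul_assoc, mul_assoc y a x, mul_assoc y (a * x) a, hx₁]
  calc x = x * a * x := hx₂.symm
    _ = y * a * y := by rw [mul_assoc, hleft, ← mul_assoc, hright]
    _ = y := hy₂

end IsMoorePenroseInverse

theorem isMoorePenroseInverse_units_inv_mul {R : Type*} [Monoid R] [StarMul R] {p a : R}
    (b : Rˣ) (hp : IsIdempotentElem p) (hps : IsSelfAdjoint p) (hpb : p * b = a)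
    (hbp : b * p = a) : IsMoorePenroseInverse a (↑b⁻¹ * p) := by
  have hcomm : Commute p ↑b⁻¹ := Commute.units_inv_right (hpb.trans hbp.symm)
  have hax : a * (↑b⁻¹ * p) = p := by
    rw [← hpb, mul_assoc, ← mul_assoc (b : R), b.mul_inv, one_mul, hp.eq]
  have hxa : ↑b⁻¹ * p * a = p := by
    rw [← hbp, ← mul_assoc, mul_assoc (↑b⁻¹ : R) p, hpb, ← hbp, ← mul_assoc, b.inv_mul, one_mul,
      hp.eq]
  have hpa : p * a = a := by rw [← hpb, ← mul_assoc, hp.eq]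
  exact ⟨by rw [hax, hpa], by rw [hxa, ← mul_assoc, hcomm.eq, mul_assoc, hp.eq], by rwa [hax],
    by rwa [hxa]⟩

namespace IsIdempotentElem

variable {R S : Type*} [Ring R] [CommSemiring S] [Algebra S R] {p : R}

theorem mul_mul_add_smul_one_sub_mul (hp : IsIdempotentElem p) (m : R) (s : S) :
    (p * m * p + s • (1 - p)) * p = p * m * p := by
  rw [add_mul, smul_mul_assoc, sub_mul, one_mul, hp.eq, sub_self, smul_zero, add_zero, mul_assoc,
    hp.eq]

theorem mul_mul_mul_add_smul_one_sub (hp : IsIdempotentElem p) (m : R) (s : S) :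
    p * (p * m * p + s • (1 - p)) = p * m * p := by
  rw [mul_add, mul_smul_comm, mul_sub, mul_one, hp.eq, sub_self, smul_zero, add_zero, ← mul_assoc,
    ← mul_assoc, hp.eq]

end IsIdempotentElem

section RCLike

variable {n 𝕜 : Type*} [Fintype n] [DecidableEq n] [RCLike 𝕜]

theorem Matrix.PosDef.mul_mul_add_smul_one_sub {P M : Matrix n n 𝕜} (hP : P.IsHermitian)
    (hPP : IsIdempotentElem P) (hM : M.PosDef) {μ : 𝕜} (hμ : 0 < μ) :
    (P * M * P + μ • (1 - P)).PosDef := by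
  set Q := 1 - P
  have hQ : Q.IsHermitian := isHermitian_one.sub hP
  have hQQ : IsIdempotentElem Q := hPP.one_sub
  have hPMP : P * M * P = Pᴴ * M * P := by rw [hP.eq]
  have hQ1 : Q = Qᴴ * 1 * Q := by rw [hQ.eq, mul_one, hQQ.eq]
  have quad {A : Matrix n n 𝕜} (B : Matrix n n 𝕜) (x : n → 𝕜) :
      star x ⬝ᵥ (Bᴴ * A * B) *ᵥ x = star (B *ᵥ x) ⬝ᵥ A *ᵥ (B *ᵥ x) := by
    simp only [star_mulVec, dotProduct_mulVec, vecMul_vecMul, Matrix.mul_assoc]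
  have hherm : (P * M * P + μ • Q).IsHermitian := by
    rw [hPMP, hQ1]
    exact ((hM.posSemidef.conjTranspose_mul_mul_same P).add
      ((PosSemidef.one.conjTranspose_mul_mul_same Q).smul hμ.le)).isHermitian
  refine .of_dotProduct_mulVec_pos hherm fun x hx => ?_
  rw [add_mulVec, dotProduct_add, smul_mulVec, dotProduct_smul, hPMP, quad, hQ1, quad, one_mulVec,
    smul_eq_mul]
  by_cases hPx : P *ᵥ x = 0
  · have hQx : Q *ᵥ x = x := by simp [Q, sub_mulVec, hPx]
    rw [hPx, hQx, mulVec_zero, dotProduct_zero, zero_add]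
    exact mul_pos hμ (dotProduct_star_self_pos_iff.2 hx)
  · exact add_pos_of_pos_of_nonneg (hM.dotProduct_mulVec_pos hPx)
      (mul_nonneg hμ.le (dotProduct_star_self_nonneg _))

theorem Matrix.isMoorePenroseInverse_inv_mul {P M : Matrix n n 𝕜} (hP : P.IsHermitian)
    (hPP : IsIdempotentElem P) (hM : M.PosDef) {μ : 𝕜} (hμ : 0 < μ) :
    IsMoorePenroseInverse (P * M * P) ((P * M * P + μ • (1 - P))⁻¹ * P) := by
  have hunit := (hM.mul_mul_add_smul_one_sub hP hPP hμ).isUnit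
  simpa only [coe_units_inv, hunit.unit_spec] using
    isMoorePenroseInverse_units_inv_mul hunit.unit hPP hP
      (hPP.mul_mul_mul_add_smul_one_sub M μ) (hPP.mul_mul_add_smul_one_sub_mul M μ)

end RCLike

/-- `X = M̄⁻¹ P` is the Moore–Penrose pseudoinverse of `M̄₀ = PMP`; in particular
`M̄⁻¹ P` does not depend on the virtual mass `μ`. -/
theorem stmt_16 (n : ℕ)
    (P M : Matrix (Fin n) (Fin n) ℝ)
    (hPsymm : Pᵀ = P) (hPidem : P * P = P)
    (hM : M.PosDef) (μ : ℝ) (hμ : 0 < μ)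
    (Mbar Mbar₀ X : Matrix (Fin n) (Fin n) ℝ)
    (hMbar : Mbar = P * M * P + μ • ((1 : Matrix (Fin n) (Fin n) ℝ) - P))
    (hMbar₀ : Mbar₀ = P * M * P)
    (hX : X = Mbar⁻¹ * P) :
    (Mbar₀ * X * Mbar₀ = Mbar₀ ∧ X * Mbar₀ * X = X ∧
      (Mbar₀ * X)ᵀ = Mbar₀ * X ∧ (X * Mbar₀)ᵀ = X * Mbar₀) ∧
    (∀ μ' : ℝ, 0 < μ' →
      (P * M * P + μ' • ((1 : Matrix (Fin n) (Fin n) ℝ) - P))⁻¹ * P = X) := by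
  subst hMbar hMbar₀ hX
  have hP : P.IsHermitian := isHermitian_iff_isSymm.2 hPsymm
  have hMP : ∀ μ' : ℝ, 0 < μ' → IsMoorePenroseInverse (P * M * P)
      ((P * M * P + μ' • (1 - P))⁻¹ * P) := fun μ' hμ' =>
    isMoorePenroseInverse_inv_mul hP hPidem hM hμ'
  obtain ⟨h₁, h₂, h₃, h₄⟩ := hMP μ hμ
  exact ⟨⟨h₁, h₂, (isHermitian_iff_isSymm.1 h₃).eq, (isHermitian_iff_isSymm.1 h₄).eq⟩,
    fun μ' hμ' => (hMP μ' hμ').unique (hMP μ hμ)⟩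
end
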